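/- arXiv:1908.02216 — 2 statements merged into one kernel-verified Lean document; each statement's English description precedes it below -/
import Mathlib

section
/- For all real numbers α ≥ 0 and x ∈ (0,1], one has ln(e + α/x) ≤ ln(e + α) · (1 − ln x). -/
open Real

lemma add_div_le_add_div_of_le_one {K : Type*} [Field K] [LinearOrder K] [IsStrictOrderedRing K]
    {a x : K} (b : K) (ha : 0 ≤ a) (hx : 0 < x) (hx1 : x ≤ 1) : a + b / x ≤ (a + b) / x := by
  rw [add_div]
  gcongr
  exact le_div_self ha hx hx1

lemma one_le_log_exp_one_add {α : ℝ} (hα : 0 ≤ α) : 1 ≤ log (exp 1 + α) := by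
  rw [le_log_iff_exp_le (by positivity)]
  linarith

lemma sub_le_mul_one_sub {K : Type*} [CommRing K] [LinearOrder K] [IsStrictOrderedRing K]
    {a b : K} (ha : 1 ≤ a) (hb : b ≤ 0) : a - b ≤ a * (1 - b) := by
  nlinarith

theorem log_interpolation_bound (α x : ℝ) (hα : 0 ≤ α) (hx : 0 < x) (hx1 : x ≤ 1) :
    Real.log (Real.exp 1 + α / x) ≤ Real.log (Real.exp 1 + α) * (1 - Real.log x) :=
  calc log (exp 1 + α / x) ≤ log ((exp 1 + α) / x) :=
        log_le_log (by positivity) (add_div_le_add_div_of_le_one α (exp_pos 1).le hx hx1)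
    _ = log (exp 1 + α) - log x := log_div (by positivity) hx.ne'
    _ ≤ log (exp 1 + α) * (1 - log x) :=
        sub_le_mul_one_sub (one_le_log_exp_one_add hα) (log_nonpos hx.le hx1)
end

section
/- Osgood's lemma: Let f : [0,T] → [0,∞) be measurable, γ : [0,T] → [0,∞) locally integrable, and μ : (0,∞) → (0,∞) continuous and nondecreasing with ∫₀¹ dr/μ(r) = +∞. If f(t) ≤ ∫₀ᵗ γ(s) μ(f(s)) ds for all t ∈ [0,T] (i.e., the constant a equals 0), then f(t) = 0 for all t ∈ [0,T]. -/
open MeasureTheory Set Filter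

theorem osgood_aux (b : ℝ) (hb : 0 ≤ b) (γ μ g : ℝ → ℝ)
    (hγ_nonneg : ∀ s ∈ Ioc (0:ℝ) b, 0 ≤ γ s) (hγ_int : IntegrableOn γ (Ioc 0 b))
    (hμ_pos : ∀ r : ℝ, 0 < r → 0 < μ r)
    (hμ_cont : ContinuousOn μ (Ioi 0)) (hμ_mono : MonotoneOn μ (Ioi 0))
    (hμ_div : Tendsto (fun ε : ℝ => ∫ r in Ioc ε 1, 1 / μ r) (nhdsWithin 0 (Ioi 0)) atTop)
    (hg_nonneg : ∀ s ∈ Ioc (0:ℝ) b, 0 ≤ g s) (hg_int : IntegrableOn g (Ioc 0 b))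
    (hg_zero : ∀ s ∈ Ioc (0:ℝ) b, (∫ u in Ioc 0 s, g u) = 0 → g s = 0)
    (hg_le : ∀ s ∈ Ioc (0:ℝ) b, 0 < (∫ u in Ioc 0 s, g u) →
      g s ≤ γ s * μ (∫ u in Ioc 0 s, g u)) :
    (∫ u in Ioc (0:ℝ) b, g u) = 0 := by
  set G : ℝ → ℝ := fun t => ∫ u in Ioc (0:ℝ) t, g u with hG
  -- basic facts about G
  have hgint' : ∀ t₁ t₂ : ℝ, 0 ≤ t₁ → t₂ ≤ b → IntegrableOn g (Ioc t₁ t₂) := by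
    intro t₁ t₂ h1 h2
    exact hg_int.mono_set (Ioc_subset_Ioc h1 h2)
  have hGadd : ∀ t₁ t₂ : ℝ, 0 ≤ t₁ → t₁ ≤ t₂ → t₂ ≤ b →
      G t₂ = G t₁ + ∫ u in Ioc t₁ t₂, g u := by
    intro t₁ t₂ h1 h12 h2
    rw [hG]
    simp only
    rw [← setIntegral_union ((Ioc_disjoint_Ioc_of_le le_rfl)) measurableSet_Ioc
      (hgint' 0 t₁ le_rfl (h12.trans h2)) (hgint' t₁ t₂ h1 h2),
      Ioc_union_Ioc_eq_Ioc h1 h12]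
  have hGnn : ∀ t₁ t₂ : ℝ, 0 ≤ t₁ → t₂ ≤ b → (0:ℝ) ≤ ∫ u in Ioc t₁ t₂, g u := by
    intro t₁ t₂ h1 h2
    apply setIntegral_nonneg measurableSet_Ioc
    intro x hx
    exact hg_nonneg x ⟨lt_of_le_of_lt h1 hx.1, hx.2.trans h2⟩
  have hGmono : ∀ t₁ t₂ : ℝ, 0 ≤ t₁ → t₁ ≤ t₂ → t₂ ≤ b → G t₁ ≤ G t₂ := by
    intro t₁ t₂ h1 h12 h2
    rw [hGadd t₁ t₂ h1 h12 h2]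
    linarith [hGnn t₁ t₂ h1 h2]
  have hG0 : G 0 = 0 := by simp [hG]
  have hGnonneg : ∀ t ∈ Icc (0:ℝ) b, 0 ≤ G t := fun t ht => hG0 ▸ hGmono 0 t le_rfl ht.1 ht.2
  have hGcont : ContinuousOn G (Icc 0 b) := by
    apply intervalIntegral.continuousOn_primitive
    rwa [integrableOn_Icc_iff_integrableOn_Ioc]
  by_contra hGb
  have hGbpos : 0 < G b := lt_of_le_of_ne (hGnonneg b ⟨hb, le_rfl⟩) (Ne.symm hGb)
  -- the last time G is zero
  set Z : Set ℝ := {t | t ∈ Icc (0:ℝ) b ∧ G t = 0} with hZ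
  have hZ0 : (0:ℝ) ∈ Z := ⟨⟨le_rfl, hb⟩, hG0⟩
  have hZne : Z.Nonempty := ⟨0, hZ0⟩
  have hZbdd : BddAbove Z := ⟨b, fun t ht => ht.1.2⟩
  set t0 : ℝ := sSup Z with ht0def
  have ht0mem : t0 ∈ Icc (0:ℝ) b := ⟨le_csSup hZbdd hZ0, csSup_le hZne (fun t ht => ht.1.2)⟩
  have hGzero_lt : ∀ t, 0 ≤ t → t < t0 → G t = 0 := by
    intro t ht htlt
    obtain ⟨z, hz, hzt⟩ := exists_lt_of_lt_csSup hZne htlt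
    have := hGmono t z ht hzt.le hz.1.2
    have h2 := hGnonneg t ⟨ht, hzt.le.trans hz.1.2⟩
    rw [hz.2] at this
    linarith
  have hGt0 : G t0 = 0 := by
    have heq : EqOn g (fun _ => (0:ℝ)) (Ioo 0 t0) := by
      intro u hu
      exact hg_zero u ⟨hu.1, hu.2.le.trans ht0mem.2⟩ (hGzero_lt u hu.1.le hu.2)
    have h1 : G t0 = ∫ u in Ioo (0:ℝ) t0, g u := integral_Ioc_eq_integral_Ioo
    rw [h1, setIntegral_congr_fun measurableSet_Ioo heq, integral_zero]
  have ht0lt : t0 < b := by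
    rcases lt_or_eq_of_le ht0mem.2 with h | h
    · exact h
    · rw [h] at hGt0; exact absurd hGt0 hGb
  have hGpos : ∀ t, t0 < t → t ≤ b → 0 < G t := by
    intro t h1 h2
    rcases lt_or_eq_of_le (hGnonneg t ⟨ht0mem.1.trans h1.le, h2⟩) with h | h
    · exact h
    · exact absurd (le_csSup hZbdd ⟨⟨ht0mem.1.trans h1.le, h2⟩, h.symm⟩) (not_le.mpr h1)
  -- the function Ψ
  set Ψ : ℝ → ℝ := fun x => ∫ r in Ioc x 1, 1 / μ r with hΨdef
  have hinv_anti : ∀ x y : ℝ, 0 < x → AntitoneOn (fun r => 1 / μ r) (Icc x y) := by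
    intro x y hx r hr r' hr' hrr'
    have h1 : 0 < μ r := hμ_pos r (lt_of_lt_of_le hx hr.1)
    have h2 : μ r ≤ μ r' := hμ_mono (lt_of_lt_of_le hx hr.1) (lt_of_lt_of_le hx hr'.1) hrr'
    exact one_div_le_one_div_of_le h1 h2
  have hinv_int : ∀ x y : ℝ, 0 < x → IntegrableOn (fun r => 1 / μ r) (Ioc x y) := by
    intro x y hx
    rcases le_or_gt x y with h | h
    · exact (AntitoneOn.integrableOn_isCompact isCompact_Icc (hinv_anti x y hx)).mono_set Ioc_subset_Icc_self
    · simp [Ioc_eq_empty (not_lt.mpr h.le)]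
  have hΨdiff : ∀ x y : ℝ, 0 < x → x ≤ y → y ≤ 1 →
      Ψ x - Ψ y = ∫ r in Ioc x y, 1 / μ r := by
    intro x y hx hxy hy1
    have : Ψ x = (∫ r in Ioc x y, 1 / μ r) + Ψ y := by
      rw [hΨdef]
      simp only
      rw [← setIntegral_union (Ioc_disjoint_Ioc_of_le le_rfl) measurableSet_Ioc
        (hinv_int x y hx) (hinv_int y 1 (hx.trans_le hxy)),
        Ioc_union_Ioc_eq_Ioc hxy hy1]
    linarith
  have hΨbound : ∀ x y : ℝ, 0 < x → x ≤ y → y ≤ 1 →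
      Ψ x - Ψ y ≤ (y - x) * (1 / μ x) := by
    intro x y hx hxy hy1
    rw [hΨdiff x y hx hxy hy1]
    have hmono : ∀ r ∈ Ioc x y, 1 / μ r ≤ 1 / μ x := by
      intro r hr
      exact hinv_anti x y hx ⟨le_rfl, hxy⟩ ⟨hr.1.le, hr.2⟩ hr.1.le
    calc (∫ r in Ioc x y, 1 / μ r) ≤ ∫ _ in Ioc x y, 1 / μ x :=
          setIntegral_mono_on (hinv_int x y hx)
            (integrableOn_const measure_Ioc_lt_top.ne) measurableSet_Ioc hmono
      _ = (y - x) * (1 / μ x) := by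
          rw [setIntegral_const, Real.volume_real_Ioc_of_le hxy, smul_eq_mul]
  -- choose the threshold ε from the divergence hypothesis
  set A : ℝ := ∫ u in Ioc (0:ℝ) b, γ u with hAdef
  have hA0 : 0 ≤ A := setIntegral_nonneg measurableSet_Ioc hγ_nonneg
  set c : ℝ := min (G b) 1 with hcdef
  have hc : 0 < c := lt_min hGbpos one_pos
  have hc1 : c ≤ 1 := min_le_right _ _
  have hcGb : c ≤ G b := min_le_left _ _
  set M : ℝ := Ψ c + 2 * A + 1 with hMdef
  have hev : ∀ᶠ x in nhdsWithin 0 (Ioi 0), M ≤ Ψ x := hμ_div.eventually_ge_atTop M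
  rw [eventually_nhdsWithin_iff, Metric.eventually_nhds_iff] at hev
  obtain ⟨ε, hε, hεM⟩ := hev
  -- b' : first level-c point
  have hIVT := intermediate_value_Icc ht0mem.2
    (hGcont.mono (Icc_subset_Icc ht0mem.1 le_rfl))
  have hcmem : c ∈ Icc (G t0) (G b) := by rw [hGt0]; exact ⟨hc.le, hcGb⟩
  obtain ⟨b', hb'mem, hGb'⟩ := hIVT hcmem
  have ht0b' : t0 < b' := by
    rcases lt_or_eq_of_le hb'mem.1 with h | h
    · exact h
    · rw [← h, hGt0] at hGb'; exact absurd hGb'.symm (ne_of_gt hc)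
  have hb'b : b' ≤ b := hb'mem.2
  -- a : a point just after t0 where G is small
  have htend : Tendsto G (nhdsWithin t0 (Icc 0 b)) (nhds 0) := by
    have := hGcont t0 ht0mem
    rwa [ContinuousWithinAt, hGt0] at this
  have hfin : ∀ᶠ t in nhdsWithin t0 (Icc 0 b), G t < ε := htend.eventually_lt_const hε
  have hle : nhdsWithin t0 (Ioc t0 b') ≤ nhdsWithin t0 (Icc 0 b) :=
    nhdsWithin_mono _ (fun x hx => ⟨ht0mem.1.trans hx.1.le, hx.2.trans hb'b⟩)
  have hnebot : (nhdsWithin t0 (Ioc t0 b')).NeBot := by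
    rw [nhdsWithin_Ioc_eq_nhdsGT ht0b']
    infer_instance
  obtain ⟨a, haG, ha⟩ := ((hfin.filter_mono hle).and eventually_mem_nhdsWithin).exists
  have hat0 : t0 < a := ha.1
  have hab' : a ≤ b' := ha.2
  have hab : a ≤ b := hab'.trans hb'b
  have ha0 : 0 ≤ a := ht0mem.1.trans hat0.le
  have hGa : 0 < G a := hGpos a hat0 hab
  have hΨa : M ≤ Ψ (G a) := by
    refine hεM ?_ hGa
    rw [Real.dist_eq, sub_zero, abs_of_pos hGa]
    exact haG
  -- the partition argument
  have hmain : Ψ (G a) - Ψ c ≤ 2 * A := by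
    set m : ℝ := μ (G a) with hmdef
    have hm : 0 < m := hμ_pos _ hGa
    have hGposIcc : ∀ s ∈ Icc a b', G s ∈ Ioi (0:ℝ) := fun s hs =>
      hGpos s (hat0.trans_le hs.1) (hs.2.trans hb'b)
    have hGcont' : ContinuousOn (fun s => μ (G s)) (Icc a b') :=
      hμ_cont.comp (hGcont.mono (fun x hx => ⟨ha0.trans hx.1, hx.2.trans hb'b⟩)) hGposIcc
    have hUC := isCompact_Icc.uniformContinuousOn_of_continuous hGcont'
    rw [Metric.uniformContinuousOn_iff] at hUC
    obtain ⟨δ, hδ, hδ'⟩ := hUC m hm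
    obtain ⟨n0, hn0⟩ := exists_nat_gt ((b' - a) / δ)
    set n : ℕ := n0 + 1 with hndef
    have hnpos : (0:ℝ) < n := by positivity
    have hmesh : (b' - a) / n < δ := by
      have h2 : (b' - a) / δ < n := by
        rw [hndef]; push_cast; linarith
      have h1 : b' - a < n * δ :=
        calc b' - a = ((b' - a) / δ) * δ := by field_simp
          _ < n * δ := mul_lt_mul_of_pos_right h2 hδ
      rw [div_lt_iff₀ hnpos]
      linarith [mul_comm (n:ℝ) δ]
    set p : ℕ → ℝ := fun i => a + i * ((b' - a) / n) with hpdef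
    have hp0 : p 0 = a := by simp [hpdef]
    have hpn : p n = b' := by
      rw [hpdef]; field_simp; ring
    have hpmono : ∀ i j : ℕ, i ≤ j → p i ≤ p j := by
      intro i j hij
      simp only [hpdef]
      have h1 : (i:ℝ) ≤ j := Nat.cast_le.mpr hij
      have h2 : 0 ≤ (b' - a) / n := div_nonneg (by linarith) hnpos.le
      nlinarith
    have hpmem : ∀ i : ℕ, i ≤ n → p i ∈ Icc a b' := by
      intro i hi
      constructor
      · rw [← hp0]; exact hpmono 0 i (Nat.zero_le _)
      · rw [← hpn]; exact hpmono i n hi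
    have hpstep : ∀ i : ℕ, p (i+1) - p i = (b' - a) / n := by
      intro i; simp only [hpdef]; push_cast; ring
    set Γ : ℕ → ℝ := fun i => ∫ u in Ioc a (p i), γ u with hΓdef
    have hγint' : ∀ t₁ t₂ : ℝ, 0 ≤ t₁ → t₂ ≤ b → IntegrableOn γ (Ioc t₁ t₂) :=
      fun t₁ t₂ h1 h2 => hγ_int.mono_set (Ioc_subset_Ioc h1 h2)
    have hΓadd : ∀ i : ℕ, i < n → Γ (i+1) - Γ i = ∫ u in Ioc (p i) (p (i+1)), γ u := by
      intro i hi
      have h1 : a ≤ p i := (hpmem i hi.le).1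
      have h2 : p i ≤ p (i+1) := hpmono i (i+1) (Nat.le_succ _)
      have h3 : p (i+1) ≤ b := (hpmem (i+1) hi).2.trans hb'b
      have hsplit : (∫ u in Ioc a (p (i+1)), γ u) =
          (∫ u in Ioc a (p i), γ u) + ∫ u in Ioc (p i) (p (i+1)), γ u := by
        rw [← setIntegral_union (Ioc_disjoint_Ioc_of_le le_rfl) measurableSet_Ioc
          (hγint' a (p i) ha0 ((hpmem i hi.le).2.trans hb'b))
          (hγint' (p i) (p (i+1)) (ha0.trans h1) h3),
          Ioc_union_Ioc_eq_Ioc h1 h2]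
      rw [hΓdef]; simp only
      linarith [hsplit]
    have hterm : ∀ i : ℕ, i < n → Ψ (G (p i)) - Ψ (G (p (i+1))) ≤ 2 * (Γ (i+1) - Γ i) := by
      intro i hi
      have hpi := hpmem i hi.le
      have hpi1 := hpmem (i+1) hi
      have hx : 0 < G (p i) := hGposIcc _ hpi
      have hxy : G (p i) ≤ G (p (i+1)) :=
        hGmono _ _ (ha0.trans hpi.1) (hpmono i (i+1) (Nat.le_succ _)) (hpi1.2.trans hb'b)
      have hy1 : G (p (i+1)) ≤ 1 := by
        have h := hGmono (p (i+1)) b' (ha0.trans hpi1.1) hpi1.2 hb'b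
        rw [hGb'] at h
        exact h.trans hc1
      have hstep1 := hΨbound _ _ hx hxy hy1
      have hstep2 : G (p (i+1)) - G (p i) = ∫ u in Ioc (p i) (p (i+1)), g u := by
        have := hGadd (p i) (p (i+1)) (ha0.trans hpi.1) (hpmono i (i+1) (Nat.le_succ _))
          (hpi1.2.trans hb'b)
        linarith
      have hmux : m ≤ μ (G (p i)) :=
        hμ_mono hGa hx (hGmono a (p i) ha0 hpi.1 (hpi.2.trans hb'b))
      have hstep3 : (∫ u in Ioc (p i) (p (i+1)), g u) ≤
          ∫ u in Ioc (p i) (p (i+1)), γ u * (2 * μ (G (p i))) := by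
        apply setIntegral_mono_on (hgint' _ _ (ha0.trans hpi.1) (hpi1.2.trans hb'b))
          ((hγint' _ _ (ha0.trans hpi.1) (hpi1.2.trans hb'b)).mul_const _) measurableSet_Ioc
        intro u hu
        have hu_mem : u ∈ Icc a b' := ⟨hpi.1.trans hu.1.le, hu.2.trans hpi1.2⟩
        have hu0b : u ∈ Ioc (0:ℝ) b :=
          ⟨lt_of_le_of_lt (ha0.trans hpi.1) hu.1, hu.2.trans (hpi1.2.trans hb'b)⟩
        have hGu : 0 < G u := hGposIcc u hu_mem
        have hdist : dist u (p i) < δ := by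
          rw [Real.dist_eq, abs_of_nonneg (by linarith [hu.1.le])]
          calc u - p i ≤ p (i+1) - p i := by linarith [hu.2]
            _ = (b' - a) / ↑n := hpstep i
            _ < δ := hmesh
        have hμclose := hδ' u hu_mem (p i) hpi hdist
        rw [Real.dist_eq] at hμclose
        have hμle : μ (G u) ≤ 2 * μ (G (p i)) := by
          have h1 := le_abs_self (μ (G u) - μ (G (p i)))
          linarith [abs_lt.mp hμclose]
        calc g u ≤ γ u * μ (G u) := hg_le u hu0b hGu
          _ ≤ γ u * (2 * μ (G (p i))) :=
            mul_le_mul_of_nonneg_left hμle (hγ_nonneg u hu0b)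
      have hstep4 : (∫ u in Ioc (p i) (p (i+1)), γ u * (2 * μ (G (p i)))) =
          (Γ (i+1) - Γ i) * (2 * μ (G (p i))) := by
        rw [hΓadd i hi, integral_mul_const]
      have hμpi : 0 < μ (G (p i)) := hμ_pos _ hx
      calc Ψ (G (p i)) - Ψ (G (p (i+1)))
          ≤ (G (p (i+1)) - G (p i)) * (1 / μ (G (p i))) := hstep1
        _ ≤ ((Γ (i+1) - Γ i) * (2 * μ (G (p i)))) * (1 / μ (G (p i))) := by
            apply mul_le_mul_of_nonneg_right _ (by positivity)
            rw [hstep2]; rw [hstep4] at hstep3; exact hstep3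
        _ = 2 * (Γ (i+1) - Γ i) := by field_simp
    have hsum1 : ∑ i ∈ Finset.range n, (Ψ (G (p i)) - Ψ (G (p (i+1)))) = Ψ (G a) - Ψ c := by
      rw [Finset.sum_range_sub' (fun i => Ψ (G (p i)))]
      rw [hp0, hpn, hGb']
    have hsum2 : ∑ i ∈ Finset.range n, (2 * (Γ (i+1) - Γ i)) = 2 * Γ n := by
      rw [← Finset.mul_sum, Finset.sum_range_sub (fun i => Γ i)]
      have h0 : Γ 0 = 0 := by rw [hΓdef]; simp [hp0]
      rw [h0]; ring
    have hΓn : Γ n ≤ A := by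
      rw [hΓdef, hAdef]
      simp only [hpn]
      apply setIntegral_mono_set hγ_int
        ((ae_restrict_iff' measurableSet_Ioc).mpr (ae_of_all _ hγ_nonneg))
      exact HasSubset.Subset.eventuallyLE (Ioc_subset_Ioc ha0 hb'b)
    have hfs := Finset.sum_le_sum
      (fun i (hi : i ∈ Finset.range n) => hterm i (Finset.mem_range.mp hi))
    rw [hsum1, hsum2] at hfs
    linarith
  linarith [hΨa, hmain]

theorem osgood_lemma_zero (T : ℝ) (hT : 0 ≤ T) (f γ μ : ℝ → ℝ)
    (hf_meas : Measurable f) (hf_nonneg : ∀ t ∈ Icc 0 T, 0 ≤ f t)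
    (hγ_nonneg : ∀ t ∈ Icc 0 T, 0 ≤ γ t) (hγ_int : IntegrableOn γ (Icc 0 T))
    (hμ_pos : ∀ r : ℝ, 0 < r → 0 < μ r) (hμ0 : μ 0 = 0)
    (hμ_cont : ContinuousOn μ (Ioi 0)) (hμ_mono : MonotoneOn μ (Ioi 0))
    (hμ_div : Tendsto (fun ε : ℝ => ∫ r in Ioc ε 1, 1 / μ r) (nhdsWithin 0 (Ioi 0)) atTop)
    (hineq : ∀ t ∈ Icc 0 T, f t ≤ ∫ s in Ioc 0 t, γ s * μ (f s)) :
    ∀ t ∈ Icc 0 T, f t = 0 := by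
  intro t ht
  set ν : ℝ → ℝ := fun r => if 0 < r then μ r else 0 with hνdef
  have hν_eq : ∀ s ∈ Icc (0:ℝ) T, ν (f s) = μ (f s) := by
    intro s hs
    rcases lt_or_eq_of_le (hf_nonneg s hs) with h | h
    · simp [hνdef, if_pos h]
    · simp [hνdef, ← h, hμ0]
  have hν_nonneg : ∀ r : ℝ, 0 ≤ ν r := by
    intro r
    simp only [hνdef]
    rcases lt_or_ge 0 r with h | h
    · rw [if_pos h]; exact (hμ_pos r h).le
    · rw [if_neg (not_lt.mpr h)]
  set g : ℝ → ℝ := fun s => γ s * ν (f s) with hgdef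
  have hIcongr : ∀ s ∈ Icc (0:ℝ) T,
      (∫ u in Ioc 0 s, γ u * μ (f u)) = ∫ u in Ioc 0 s, g u := by
    intro s hs
    apply setIntegral_congr_fun measurableSet_Ioc
    intro u hu
    simp only [hgdef]
    rw [hν_eq u ⟨hu.1.le, hu.2.trans hs.2⟩]
  have hfnn := hf_nonneg t ht
  by_cases hint : IntegrableOn g (Ioc 0 t)
  · have hsubT : Ioc (0:ℝ) t ⊆ Icc 0 T := fun x hx => ⟨hx.1.le, hx.2.trans ht.2⟩
    have key : (∫ u in Ioc (0:ℝ) t, g u) = 0 := by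
      apply osgood_aux t ht.1 γ μ g
        (fun s hs => hγ_nonneg s (hsubT hs))
        (hγ_int.mono_set (fun x hx => hsubT hx))
        hμ_pos hμ_cont hμ_mono hμ_div
        (fun s hs => mul_nonneg (hγ_nonneg s (hsubT hs)) (hν_nonneg _))
        hint
      · -- hg_zero
        intro s hs h0
        have hfle : f s ≤ 0 := by
          have h1 := hineq s (hsubT hs)
          rwa [hIcongr s (hsubT hs), h0] at h1
        have hfs : f s = 0 := le_antisymm hfle (hf_nonneg s (hsubT hs))
        simp [hgdef, hνdef, hfs]
      · -- hg_le
        intro s hs hpos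
        have hfle : f s ≤ ∫ u in Ioc (0:ℝ) s, g u := by
          have h1 := hineq s (hsubT hs)
          rwa [hIcongr s (hsubT hs)] at h1
        simp only [hgdef]
        apply mul_le_mul_of_nonneg_left _ (hγ_nonneg s (hsubT hs))
        rcases lt_or_eq_of_le (hf_nonneg s (hsubT hs)) with h | h
        · rw [hνdef]; simp only [if_pos h]
          exact hμ_mono h hpos hfle
        · rw [hνdef]; simp only [← h, lt_irrefl, if_false]
          exact (hμ_pos _ hpos).le
    have h1 := hineq t ht
    rw [hIcongr t ht, key] at h1
    linarith
  · have hnint : ¬ IntegrableOn (fun u => γ u * μ (f u)) (Ioc 0 t) := by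
      intro hcon
      apply hint
      apply (integrableOn_congr_fun ?_ measurableSet_Ioc).mp hcon
      intro u hu
      simp only [hgdef]
      rw [hν_eq u ⟨hu.1.le, hu.2.trans ht.2⟩]
    have h0 : (∫ u in Ioc (0:ℝ) t, γ u * μ (f u)) = 0 := integral_undef hnint
    have h1 := hineq t ht
    rw [h0] at h1
    linarith
end
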